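/- For a square-summable sequence φ: ℤ² → ℂ and any (m,n) ∈ ℤ², |φ(m,n)|⁴ ≤ ‖D₂D₁φ‖_{ℓ²} · ‖D₁φ‖_{ℓ²} · ‖D₂φ‖_{ℓ²} · ‖φ‖_{ℓ²}, where all norms are over ℤ². -/

import Mathlib

/-!
A sequence `g` on `ℤ` that vanishes at `±∞` satisfies `2 g(n) ≤ ∑ₖ |g(k+1) - g(k)|`, by
telescoping from `n` to both ends. For `g = ‖ψ‖²`, the bound
`|‖a‖² - ‖b‖²| ≤ ‖a - b‖ (‖a‖ + ‖b‖)` and Cauchy–Schwarz turn this into the one-dimensional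
Agmon inequality `‖ψ(n)‖² ≤ ‖Dψ‖ ‖ψ‖`, valid for sequences with values in any normed group.

In two dimensions it is used twice. On the row `i ↦ φ(i, n)` it gives
`|φ(m, n)|⁴ ≤ ‖D₁φ(·, n)‖² ‖φ(·, n)‖²`. On the `ℓ²(ℤ)`-valued sequence of rows `k ↦ ψ(·, k)`,
whose `ℓ²` norm is that of `ψ` on `ℤ²` and whose difference sequence is the sequence of rows of
`D₂ψ`, it gives `‖ψ(·, n)‖² ≤ ‖D₂ψ‖ ‖ψ‖`, for `ψ = D₁φ` and `ψ = φ`.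
-/

noncomputable section

/-- Partial difference in the first coordinate on ℤ². -/
def D1 (φ : ℤ × ℤ → ℂ) : ℤ × ℤ → ℂ := fun p => φ (p.1 + 1, p.2) - φ p

/-- Partial difference in the second coordinate on ℤ². -/
def D2 (φ : ℤ × ℤ → ℂ) : ℤ × ℤ → ℂ := fun p => φ (p.1, p.2 + 1) - φ p

/-- The ℓ²(ℤ²) norm. -/
def l2 (φ : ℤ × ℤ → ℂ) : ℝ := Real.sqrt (∑' p : ℤ × ℤ, ‖φ p‖ ^ 2)

open Filter Topology

section CauchySchwarz

variable {ι : Type*} {f g : ι → ℝ}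

lemma summable_mul_of_summable_sq (hf₀ : ∀ i, 0 ≤ f i) (hg₀ : ∀ i, 0 ≤ g i)
    (hf : Summable fun i => f i ^ 2) (hg : Summable fun i => g i ^ 2) :
    Summable fun i => f i * g i :=
  Real.summable_mul_of_Lp_Lq_of_nonneg .two_two hf₀ hg₀ (by simpa using hf) (by simpa using hg)

lemma tsum_mul_le_sqrt_mul_sqrt (hf₀ : ∀ i, 0 ≤ f i) (hg₀ : ∀ i, 0 ≤ g i)
    (hf : Summable fun i => f i ^ 2) (hg : Summable fun i => g i ^ 2) :
    ∑' i, f i * g i ≤ √(∑' i, f i ^ 2) * √(∑' i, g i ^ 2) := by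
  simpa [Real.sqrt_eq_rpow, one_div] using
    Real.inner_le_Lp_mul_Lq_tsum_of_nonneg .two_two hf₀ hg₀ (by simpa using hf) (by simpa using hg)

end CauchySchwarz

lemma le_tsum_abs_sub_of_tendsto {G : ℕ → ℝ} (hG : Tendsto G atTop (𝓝 0))
    (hs : Summable fun j => |G (j + 1) - G j|) : G 0 ≤ ∑' j, |G (j + 1) - G j| := by
  have htel : HasSum (fun j => G j - G (j + 1)) (G 0) := by
    refine (hasSum_iff_tendsto_nat_of_summable_norm (f := fun j => G j - G (j + 1))
      (by simpa [Real.norm_eq_abs, abs_sub_comm] using hs)).2 ?_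
    simp_rw [Finset.sum_range_sub']
    simpa using tendsto_const_nhds.sub hG
  rw [← htel.tsum_eq]
  exact htel.summable.tsum_le_tsum (fun j => abs_sub_comm (G (j + 1)) (G j) ▸ le_abs_self _) hs

lemma two_mul_le_tsum_abs_sub {g : ℤ → ℝ} (hg : Tendsto g cofinite (𝓝 0))
    (hΔ : Summable fun k => |g (k + 1) - g k|) (n : ℤ) :
    2 * g n ≤ ∑' k, |g (k + 1) - g k| := by
  set d : ℤ → ℝ := fun k => |g (k + 1) - g k| with hd
  have hshift : Summable fun k => d (n + k) := (Equiv.addLeft n).summable_iff.2 hΔ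
  have hpos : Summable fun j : ℕ => d (n + j) := hshift.comp_injective Nat.cast_injective
  have hneg : Summable fun j : ℕ => d (n + -(j + 1)) :=
    hshift.comp_injective fun a b h => by simpa using h
  have ray {e : ℕ → ℤ} (he : e.Injective) : Tendsto (g ∘ e) atTop (𝓝 0) := by
    simpa [Nat.cofinite_eq_atTop] using hg.comp he.tendsto_cofinite
  have hright : g n ≤ ∑' j : ℕ, d (n + j) := by
    simpa [hd, add_assoc] using le_tsum_abs_sub_of_tendsto (G := fun j : ℕ => g (n + j))
      (ray fun a b h => by simpa using h) (by simpa [hd, add_assoc] using hpos)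
  have hleft : g n ≤ ∑' j : ℕ, d (n + -(j + 1)) := by
    have hstep (j : ℕ) : d (n + -(j + 1)) = |g (n - (j + 1 : ℕ)) - g (n - j)| := by
      rw [hd, abs_sub_comm]; push_cast; ring_nf
    simp only [hstep] at hneg ⊢
    simpa using le_tsum_abs_sub_of_tendsto (G := fun j : ℕ => g (n - j))
      (ray fun a b h => by simpa using h) hneg
  calc 2 * g n ≤ ∑' j : ℕ, d (n + j) + ∑' j : ℕ, d (n + -(j + 1)) := by linarith
    _ = ∑' k, d (n + k) := (tsum_of_nat_of_neg_add_one (f := fun k => d (n + k)) hpos hneg).symm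
    _ = ∑' k, d k := (Equiv.addLeft n).tsum_eq d

lemma abs_sq_norm_sub_sq_norm_le {E : Type*} [SeminormedAddCommGroup E] (a b : E) :
    |‖a‖ ^ 2 - ‖b‖ ^ 2| ≤ ‖a - b‖ * (‖a‖ + ‖b‖) := by
  rw [sq_sub_sq, abs_mul, abs_of_nonneg (by positivity : 0 ≤ ‖a‖ + ‖b‖), mul_comm]
  gcongr
  exact abs_norm_sub_norm_le a b

lemma summable_sq_norm_comp_sub {α E : Type*} [SeminormedAddGroup E] {f : α → E}
    (hf : Summable fun a => ‖f a‖ ^ 2) (e : α ≃ α) :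
    Summable fun a => ‖f (e a) - f a‖ ^ 2 := by
  refine .of_nonneg_of_le (fun _ => sq_nonneg _) (fun a => ?_)
    (((e.summable_iff.2 hf).add hf).mul_left 2)
  have := norm_sub_le (f (e a)) (f a)
  simp only [Function.comp_apply]
  nlinarith [sq_nonneg (‖f (e a)‖ - ‖f a‖), norm_nonneg (f (e a) - f a)]

theorem discrete_agmon {E : Type*} [SeminormedAddCommGroup E] {ψ : ℤ → E}
    (hψ : Summable fun k => ‖ψ k‖ ^ 2) (hΔ : Summable fun k => ‖ψ (k + 1) - ψ k‖ ^ 2) (n : ℤ) :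
    ‖ψ n‖ ^ 2 ≤ √(∑' k, ‖ψ (k + 1) - ψ k‖ ^ 2) * √(∑' k, ‖ψ k‖ ^ 2) := by
  have hnext : Summable fun k => ‖ψ (k + 1)‖ ^ 2 := hψ.comp_injective (add_left_injective 1)
  have hnext_eq : ∑' k, ‖ψ (k + 1)‖ ^ 2 = ∑' k, ‖ψ k‖ ^ 2 :=
    (Equiv.addRight 1).tsum_eq fun k => ‖ψ k‖ ^ 2
  have hΔnext := summable_mul_of_summable_sq (fun _ => norm_nonneg _) (fun _ => norm_nonneg _)
    hΔ hnext
  have hΔcur := summable_mul_of_summable_sq (fun _ => norm_nonneg _) (fun _ => norm_nonneg _)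
    hΔ hψ
  have hpt (k : ℤ) : |‖ψ (k + 1)‖ ^ 2 - ‖ψ k‖ ^ 2| ≤
      ‖ψ (k + 1) - ψ k‖ * ‖ψ (k + 1)‖ + ‖ψ (k + 1) - ψ k‖ * ‖ψ k‖ := by
    simpa only [mul_add] using abs_sq_norm_sub_sq_norm_le (ψ (k + 1)) (ψ k)
  have hvar : Summable fun k => |‖ψ (k + 1)‖ ^ 2 - ‖ψ k‖ ^ 2| :=
    .of_nonneg_of_le (fun _ => abs_nonneg _) hpt (hΔnext.add hΔcur)
  suffices 2 * ‖ψ n‖ ^ 2 ≤ 2 * (√(∑' k, ‖ψ (k + 1) - ψ k‖ ^ 2) * √(∑' k, ‖ψ k‖ ^ 2)) by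
    linarith
  calc 2 * ‖ψ n‖ ^ 2 ≤ ∑' k, |‖ψ (k + 1)‖ ^ 2 - ‖ψ k‖ ^ 2| :=
        two_mul_le_tsum_abs_sub (g := fun k => ‖ψ k‖ ^ 2)
          (by simpa using hψ.tendsto_cofinite_zero) hvar n
    _ ≤ ∑' k, (‖ψ (k + 1) - ψ k‖ * ‖ψ (k + 1)‖ + ‖ψ (k + 1) - ψ k‖ * ‖ψ k‖) :=
        hvar.tsum_le_tsum hpt (hΔnext.add hΔcur)
    _ = ∑' k, ‖ψ (k + 1) - ψ k‖ * ‖ψ (k + 1)‖ + ∑' k, ‖ψ (k + 1) - ψ k‖ * ‖ψ k‖ :=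
        hΔnext.tsum_add hΔcur
    _ ≤ 2 * (√(∑' k, ‖ψ (k + 1) - ψ k‖ ^ 2) * √(∑' k, ‖ψ k‖ ^ 2)) := by
        have h₁ := tsum_mul_le_sqrt_mul_sqrt (fun _ => norm_nonneg _) (fun _ => norm_nonneg _)
          hΔ hnext
        have h₂ := tsum_mul_le_sqrt_mul_sqrt (fun _ => norm_nonneg _) (fun _ => norm_nonneg _)
          hΔ hψ
        rw [hnext_eq] at h₁
        linarith

lemma lp.norm_sq_eq_tsum {ι : Type*} {E : ι → Type*} [∀ i, NormedAddCommGroup (E i)]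
    (f : lp E 2) : ‖f‖ ^ 2 = ∑' i, ‖f i‖ ^ 2 := by
  simpa using lp.norm_rpow_eq_tsum (by norm_num) f

lemma memℓp_two_of_summable_sq {ι : Type*} {E : ι → Type*} [∀ i, NormedAddCommGroup (E i)]
    {f : ∀ i, E i} (hf : Summable fun i => ‖f i‖ ^ 2) : Memℓp f 2 :=
  memℓp_gen (by simpa using hf)

section Rows

variable {ι E : Type*} [NormedAddCommGroup E] {ψ : ι × ℤ → E}

def l2Row (hψ : Summable fun p => ‖ψ p‖ ^ 2) (k : ℤ) : lp (fun _ : ι => E) 2 :=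
  ⟨fun i => ψ (i, k), memℓp_two_of_summable_sq (hψ.comp_injective (Prod.mk_left_injective k))⟩

lemma sq_norm_l2Row (hψ : Summable fun p => ‖ψ p‖ ^ 2) (k : ℤ) :
    ‖l2Row hψ k‖ ^ 2 = ∑' i, ‖ψ (i, k)‖ ^ 2 :=
  lp.norm_sq_eq_tsum _

lemma summable_sq_norm_l2Row (hψ : Summable fun p => ‖ψ p‖ ^ 2) :
    Summable fun k => ‖l2Row hψ k‖ ^ 2 := by
  simp only [sq_norm_l2Row]
  exact hψ.prod_symm.prod

lemma tsum_sq_norm_l2Row (hψ : Summable fun p => ‖ψ p‖ ^ 2) :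
    ∑' k, ‖l2Row hψ k‖ ^ 2 = ∑' p, ‖ψ p‖ ^ 2 := by
  simp only [sq_norm_l2Row]
  exact hψ.prod_symm.tsum_prod.symm.trans <| (Equiv.prodComm ι ℤ).symm.tsum_eq fun p => ‖ψ p‖ ^ 2

lemma l2Row_succ_sub (hψ : Summable fun p => ‖ψ p‖ ^ 2)
    (hΔ : Summable fun p => ‖ψ (p.1, p.2 + 1) - ψ p‖ ^ 2) (k : ℤ) :
    l2Row hψ (k + 1) - l2Row hψ k = l2Row hΔ k :=
  rfl

lemma tsum_sq_norm_row_le (hψ : Summable fun p => ‖ψ p‖ ^ 2)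
    (hΔ : Summable fun p => ‖ψ (p.1, p.2 + 1) - ψ p‖ ^ 2) (n : ℤ) :
    ∑' i, ‖ψ (i, n)‖ ^ 2 ≤
      √(∑' p, ‖ψ (p.1, p.2 + 1) - ψ p‖ ^ 2) * √(∑' p, ‖ψ p‖ ^ 2) := by
  have hrows := discrete_agmon (summable_sq_norm_l2Row hψ)
    (by simpa only [l2Row_succ_sub hψ hΔ] using summable_sq_norm_l2Row hΔ) n
  simp only [l2Row_succ_sub hψ hΔ] at hrows
  rwa [tsum_sq_norm_l2Row, tsum_sq_norm_l2Row, sq_norm_l2Row] at hrows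

end Rows

/-- Pointwise 2D product estimate. -/
theorem agmon_2d_pointwise (φ : ℤ × ℤ → ℂ) (h : Summable fun p : ℤ × ℤ => ‖φ p‖ ^ 2)
    (m n : ℤ) :
    ‖φ (m, n)‖ ^ 4 ≤ l2 (D2 (D1 φ)) * l2 (D1 φ) * l2 (D2 φ) * l2 φ := by
  have hD1 : Summable fun p => ‖D1 φ p‖ ^ 2 :=
    summable_sq_norm_comp_sub h ((Equiv.addRight 1).prodCongr (Equiv.refl ℤ))
  have hD2 : Summable fun p => ‖D2 φ p‖ ^ 2 :=
    summable_sq_norm_comp_sub h ((Equiv.refl ℤ).prodCongr (Equiv.addRight 1))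
  have hD2D1 : Summable fun p => ‖D2 (D1 φ) p‖ ^ 2 :=
    summable_sq_norm_comp_sub hD1 ((Equiv.refl ℤ).prodCongr (Equiv.addRight 1))
  have hslice : ‖φ (m, n)‖ ^ 2 ≤ √(∑' i, ‖D1 φ (i, n)‖ ^ 2) * √(∑' i, ‖φ (i, n)‖ ^ 2) := by
    have hΔ : Summable fun i => ‖D1 φ (i, n)‖ ^ 2 := hD1.comp_injective (Prod.mk_left_injective n)
    unfold D1 at hΔ
    exact discrete_agmon (h.comp_injective (Prod.mk_left_injective n)) hΔ m
  have hrowD1 : ∑' i, ‖D1 φ (i, n)‖ ^ 2 ≤ l2 (D2 (D1 φ)) * l2 (D1 φ) :=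
    tsum_sq_norm_row_le hD1 hD2D1 n
  have hrow : ∑' i, ‖φ (i, n)‖ ^ 2 ≤ l2 (D2 φ) * l2 φ := tsum_sq_norm_row_le h hD2 n
  calc ‖φ (m, n)‖ ^ 4 = (‖φ (m, n)‖ ^ 2) ^ 2 := by ring
    _ ≤ (√(∑' i, ‖D1 φ (i, n)‖ ^ 2) * √(∑' i, ‖φ (i, n)‖ ^ 2)) ^ 2 := by gcongr
    _ = (∑' i, ‖D1 φ (i, n)‖ ^ 2) * ∑' i, ‖φ (i, n)‖ ^ 2 := by
      rw [mul_pow, Real.sq_sqrt (by positivity), Real.sq_sqrt (by positivity)]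
    _ ≤ (l2 (D2 (D1 φ)) * l2 (D1 φ)) * (l2 (D2 φ) * l2 φ) := by
      gcongr
      exact mul_nonneg (Real.sqrt_nonneg _) (Real.sqrt_nonneg _)
    _ = l2 (D2 (D1 φ)) * l2 (D1 φ) * l2 (D2 φ) * l2 φ := by ring
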